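/- For every ε > 0 there exists d₀ such that for all d ≥ d₀ the following holds: if G is a properly edge-coloured graph on n vertices with average degree at least d and maximum degree Δ ≤ εn/4, then G contains a rainbow path forest with at most ⌈log_{8/7}(1/ε)⌉ components and at least (1−ε)d edges. -/

import Mathlib

/-- A proper edge-colouring of an undirected graph: the colour function is symmetric on
edges, and no two edges sharing a vertex have the same colour. -/
def IsProperEdgeColoring {V C : Type*} (G : SimpleGraph V) (c : V → V → C) : Prop :=
  (∀ u v, G.Adj u v → c u v = c v u) ∧
  (∀ u v w, G.Adj u v → G.Adj u w → v ≠ w → c u v ≠ c u w)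

/-- A rainbow path forest with `t` components: `t` vertex-disjoint paths (the `j`-th of
length `ℓ j`), all of whose edges have pairwise distinct colours. -/
def IsRainbowPathForest {V C : Type*} (G : SimpleGraph V) (c : V → V → C) {t : ℕ}
    (ℓ : Fin t → ℕ) (p : ∀ j, Fin (ℓ j + 1) → V) : Prop :=
  (∀ (j) (i : Fin (ℓ j)), G.Adj (p j i.castSucc) (p j i.succ)) ∧
  Function.Injective (fun q : Σ j, Fin (ℓ j + 1) => p q.1 q.2) ∧
  Function.Injective (fun q : Σ j, Fin (ℓ j) => c (p q.1 q.2.castSucc) (p q.1 q.2.succ))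

/-!
Build the forest greedily. Given a rainbow path forest with `m` edges and `t` paths, delete its
vertices and the edges carrying its colours. As `Δ ≤ εn/4` and every colour class is a matching,
the average degree drops by at most `(m + t)ε/2 + m`, so the rest has average degree at least
`a = (d - m) - (m + t)ε/2`. It contains a subgraph of minimum degree at least `a/2`, and there a
longest rainbow path has at least `a/4` edges: each neighbour of its first vertex lies on the path
or repeats one of its colours there. Adding that path shrinks the deficit `d - m` by a factor
`7/8` as long as it exceeds `εd`, so `k = ⌈log_{8/7}(1/ε)⌉` paths suffice once `d ≥ 7k`.
-/

open scoped Finset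

variable {V C : Type*}

def edgeColors (c : V → V → C) (l : List V) : List C :=
  List.zipWith c l l.tail

@[simp]
lemma length_edgeColors (c : V → V → C) (l : List V) :
    (edgeColors c l).length = l.length - 1 := by
  simp [edgeColors]

lemma getElem_edgeColors (c : V → V → C) (l : List V) (i : ℕ)
    (hi : i < (edgeColors c l).length) :
    (edgeColors c l)[i] = c (l[i]'(by simp at hi; omega)) (l[i + 1]'(by simp at hi; omega)) := by
  simp [edgeColors]

def IsRainbowPath (H : SimpleGraph V) (c : V → V → C) (l : List V) : Prop :=
  l.IsChain H.Adj ∧ l.Nodup ∧ (edgeColors c l).Nodup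

lemma isRainbowPath_singleton (H : SimpleGraph V) (c : V → V → C) (v : V) :
    IsRainbowPath H c [v] :=
  ⟨List.isChain_singleton v, List.nodup_singleton v, List.nodup_nil⟩

lemma IsRainbowPath.cons {H : SimpleGraph V} {c : V → V → C} {u v : V} {l : List V}
    (h : IsRainbowPath H c (v :: l)) (hadj : H.Adj u v) (hu : u ∉ v :: l)
    (hcol : c u v ∉ edgeColors c (v :: l)) : IsRainbowPath H c (u :: v :: l) :=
  ⟨List.isChain_cons_cons.2 ⟨hadj, h.1⟩, List.nodup_cons.2 ⟨hu, h.2.1⟩,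
    List.nodup_cons.2 ⟨hcol, h.2.2⟩⟩

lemma IsProperEdgeColoring.mono {G H : SimpleGraph V} {c : V → V → C}
    (hc : IsProperEdgeColoring G c) (hHG : H ≤ G) : IsProperEdgeColoring H c :=
  ⟨fun u v h => hc.1 u v (hHG h), fun u v w h h' => hc.2 u v w (hHG h) (hHG h')⟩

lemma IsRainbowPath.mono {G H : SimpleGraph V} {c : V → V → C} {l : List V}
    (h : IsRainbowPath H c l) (hHG : H ≤ G) : IsRainbowPath G c l :=
  ⟨h.1.imp fun _ _ hadj => hHG hadj, h.2⟩

lemma exists_rel_of_mem_edgeColors {R : V → V → Prop} {c : V → V → C} {l : List V}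
    (hl : l.IsChain R) {x : C} (hx : x ∈ edgeColors c l) : ∃ u v, R u v ∧ c u v = x := by
  obtain ⟨i, hi, rfl⟩ := List.mem_iff_getElem.1 hx
  rw [getElem_edgeColors]
  exact ⟨_, _, List.isChain_iff_getElem.1 hl i _, rfl⟩

section Greedy

variable [DecidableEq V] {H : SimpleGraph V} [DecidableRel H.Adj] {c : V → V → C}

lemma card_filter_adj_le_of_forall_not_extend (hc : IsProperEdgeColoring H c) (W : Finset V)
    (v : V) (t : List V)
    (hblocked : ∀ u ∈ W, H.Adj u v → u ∈ v :: t ∨ c u v ∈ edgeColors c (v :: t)) :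
    #{u ∈ W | H.Adj v u} ≤ 2 * t.length := by
  classical
  have hsub : {u ∈ W | H.Adj v u} ⊆
      t.toFinset ∪ {u ∈ W | H.Adj v u ∧ c v u ∈ edgeColors c (v :: t)} := by
    intro u hu
    obtain ⟨huW, hvu⟩ := Finset.mem_filter.1 hu
    rcases hblocked u huW hvu.symm with hmem | hcol
    · exact Finset.mem_union_left _ (List.mem_toFinset.2
        ((List.mem_cons.1 hmem).resolve_left hvu.ne'))
    · exact Finset.mem_union_right _ (Finset.mem_filter.2 ⟨huW, hvu, hc.1 u v hvu.symm ▸ hcol⟩)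
  have hcols : #{u ∈ W | H.Adj v u ∧ c v u ∈ edgeColors c (v :: t)} ≤ t.length := by
    calc #{u ∈ W | H.Adj v u ∧ c v u ∈ edgeColors c (v :: t)}
        ≤ (edgeColors c (v :: t)).toFinset.card := by
          refine Finset.card_le_card_of_injOn (c v) (fun u hu => ?_) (fun u hu u' hu' he => ?_)
          · exact List.mem_toFinset.2 (Finset.mem_filter.1 hu).2.2
          · by_contra hne
            exact hc.2 v u u' (Finset.mem_filter.1 hu).2.1 (Finset.mem_filter.1 hu').2.1 hne he
      _ ≤ (edgeColors c (v :: t)).length := List.toFinset_card_le _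
      _ = t.length := by simp
  calc #{u ∈ W | H.Adj v u}
      ≤ t.toFinset.card + #{u ∈ W | H.Adj v u ∧ c v u ∈ edgeColors c (v :: t)} :=
        (Finset.card_le_card hsub).trans (Finset.card_union_le _ _)
    _ ≤ 2 * t.length := by linarith [List.toFinset_card_le t]

lemma exists_isRainbowPath_card_filter_adj_le (hc : IsProperEdgeColoring H c) {W : Finset V}
    (hW : W.Nonempty) :
    ∃ v t, IsRainbowPath H c (v :: t) ∧ (∀ x ∈ v :: t, x ∈ W) ∧
      #{u ∈ W | H.Adj v u} ≤ 2 * t.length := by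
  classical
  let P : ℕ → Prop := fun n => ∃ v t, IsRainbowPath H c (v :: t) ∧ (∀ x ∈ v :: t, x ∈ W) ∧
    t.length = n
  have hbound {n : ℕ} (hn : P n) : n + 1 ≤ #W := by
    obtain ⟨v, t, hvt, hW, rfl⟩ := hn
    calc t.length + 1 = (v :: t).toFinset.card := by
          rw [List.toFinset_card_of_nodup hvt.2.1, List.length_cons]
      _ ≤ #W := Finset.card_le_card fun x hx => hW x (List.mem_toFinset.1 hx)
  obtain ⟨x, hx⟩ := hW
  have hP0 : P 0 := ⟨x, [], isRainbowPath_singleton H c x, by simpa using hx, rfl⟩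
  obtain ⟨v, t, hvt, hvtW, hlen⟩ := Nat.findGreatest_spec (Nat.zero_le #W) hP0
  refine ⟨v, t, hvt, hvtW, card_filter_adj_le_of_forall_not_extend hc W v t ?_⟩
  intro u hu huv
  by_contra! hext
  have hP : P (t.length + 1) := ⟨u, v :: t, hvt.cons huv hext.1 hext.2,
    fun y hy => (List.mem_cons.1 hy).elim (· ▸ hu) (hvtW y), rfl⟩
  have := Nat.le_findGreatest (n := #W) (by have := hbound hP; omega) hP
  omega

end Greedy

section MinDegree

variable [DecidableEq V] (H : SimpleGraph V) [DecidableRel H.Adj]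

lemma sum_card_filter_adj_insert {U : Finset V} {v₀ : V} (hv₀ : v₀ ∉ U) :
    ∑ v ∈ insert v₀ U, #{u ∈ insert v₀ U | H.Adj v u} =
      ∑ v ∈ U, #{u ∈ U | H.Adj v u} + 2 * #{u ∈ U | H.Adj v₀ u} := by
  have hrow (v : V) (hv : v ∈ U) :
      #{u ∈ insert v₀ U | H.Adj v u} = #{u ∈ U | H.Adj v u} + if H.Adj v v₀ then 1 else 0 := by
    rw [Finset.filter_insert]
    split_ifs
    · exact Finset.card_insert_of_notMem (fun h => hv₀ (Finset.mem_filter.1 h).1)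
    · rfl
  rw [Finset.sum_insert hv₀, Finset.filter_insert, if_neg (H.irrefl),
    Finset.sum_congr rfl hrow, Finset.sum_add_distrib, Finset.sum_boole,
    Finset.filter_congr fun v _ => H.adj_comm v v₀]
  simp only [Nat.cast_id]
  ring

lemma exists_subset_forall_le_two_mul_card_filter_adj {U : Finset V} (hU : U.Nonempty) (a : ℝ)
    (havg : a * #U ≤ ∑ v ∈ U, (#{u ∈ U | H.Adj v u} : ℝ)) :
    ∃ W ⊆ U, W.Nonempty ∧ ∀ v ∈ W, a ≤ 2 * #{u ∈ W | H.Adj v u} := by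
  induction U using Finset.strongInduction with
  | H U ih =>
  by_cases hgood : ∀ v ∈ U, a ≤ 2 * #{u ∈ U | H.Adj v u}
  · exact ⟨U, subset_rfl, hU, hgood⟩
  push Not at hgood
  obtain ⟨v₀, hv₀, hlow⟩ := hgood
  set U' := U.erase v₀
  have hsum := sum_card_filter_adj_insert H (Finset.notMem_erase v₀ U)
  rw [Finset.insert_erase hv₀] at hsum
  have hcard : (#U : ℝ) = #U' + 1 := by
    rw [Finset.card_erase_of_mem hv₀, Nat.cast_sub (Finset.card_pos.2 hU)]
    ring
  have hlt : a * #U' < ∑ v ∈ U', (#{u ∈ U' | H.Adj v u} : ℝ) := by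
    have hsum' := congrArg (Nat.cast : ℕ → ℝ) hsum
    push_cast at hsum'
    rw [hcard] at havg
    have hfilter : {u ∈ U' | H.Adj v₀ u} = {u ∈ U | H.Adj v₀ u} := by
      rw [Finset.filter_erase, Finset.erase_eq_of_notMem (by simp)]
    rw [hfilter] at hsum'
    linarith
  have hU' : U'.Nonempty := by
    rw [Finset.nonempty_iff_ne_empty]
    rintro h
    simp [h] at hlt
  obtain ⟨W, hWU', hW⟩ := ih U' (Finset.erase_ssubset hv₀) hU' hlt.le
  exact ⟨W, hWU'.trans (Finset.erase_subset v₀ U), hW⟩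

end MinDegree

/-- Both orientations are tested so that the relation is symmetric for any `c`. -/
def SimpleGraph.withoutColors (G : SimpleGraph V) (c : V → V → C) (F : Finset C) :
    SimpleGraph V where
  Adj u v := G.Adj u v ∧ c u v ∉ F ∧ c v u ∉ F
  symm := ⟨fun _ _ h => ⟨h.1.symm, h.2.2, h.2.1⟩⟩
  loopless := ⟨fun _ h => G.irrefl h.1⟩

instance [DecidableEq C] (G : SimpleGraph V) [DecidableRel G.Adj] (c : V → V → C)
    (F : Finset C) : DecidableRel (G.withoutColors c F).Adj :=
  fun _ _ => inferInstanceAs (Decidable (_ ∧ _))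

lemma SimpleGraph.withoutColors_le (G : SimpleGraph V) (c : V → V → C) (F : Finset C) :
    G.withoutColors c F ≤ G :=
  fun _ _ h => h.1

section Counting

variable [Fintype V] [DecidableEq V] [DecidableEq C] {G : SimpleGraph V} [DecidableRel G.Adj]
  {c : V → V → C}

lemma degree_le_card_filter_withoutColors_add (hc : IsProperEdgeColoring G c) (S : Finset V)
    (F : Finset C) (v : V) :
    G.degree v ≤ #{u ∈ Sᶜ | (G.withoutColors c F).Adj v u} + #{u ∈ S | G.Adj v u} + #F := by
  have hsub : G.neighborFinset v ⊆ ({u ∈ Sᶜ | (G.withoutColors c F).Adj v u} ∪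
      {u ∈ S | G.Adj v u}) ∪ {u ∈ G.neighborFinset v | c v u ∈ F} := by
    intro u hu
    have hadj := (G.mem_neighborFinset v u).1 hu
    by_cases huS : u ∈ S
    · exact Finset.mem_union_left _ (Finset.mem_union_right _ (Finset.mem_filter.2 ⟨huS, hadj⟩))
    by_cases hcF : c v u ∈ F
    · exact Finset.mem_union_right _ (Finset.mem_filter.2 ⟨hu, hcF⟩)
    · exact Finset.mem_union_left _ (Finset.mem_union_left _ (Finset.mem_filter.2
        ⟨Finset.mem_compl.2 huS, hadj, hcF, hc.1 v u hadj ▸ hcF⟩))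
  have hF : #{u ∈ G.neighborFinset v | c v u ∈ F} ≤ #F := by
    refine Finset.card_le_card_of_injOn (c v) (fun u hu => (Finset.mem_filter.1 hu).2)
      (fun u hu u' hu' he => ?_)
    by_contra hne
    simp only [Finset.coe_filter, SimpleGraph.mem_neighborFinset, Set.mem_ofPred_eq] at hu hu'
    exact hc.2 v u u' hu.1 hu'.1 hne he
  rw [← G.card_neighborFinset_eq_degree]
  linarith [Finset.card_le_card hsub, Finset.card_union_le ({u ∈ Sᶜ | (G.withoutColors c F).Adj v u} ∪
      {u ∈ S | G.Adj v u}) {u ∈ G.neighborFinset v | c v u ∈ F},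
    Finset.card_union_le {u ∈ Sᶜ | (G.withoutColors c F).Adj v u} {u ∈ S | G.Adj v u}]

lemma sum_degree_le_sum_card_filter_withoutColors_add (hc : IsProperEdgeColoring G c)
    (S : Finset V) (F : Finset C) :
    ∑ v, G.degree v ≤ ∑ v ∈ Sᶜ, #{u ∈ Sᶜ | (G.withoutColors c F).Adj v u} +
      2 * ∑ v ∈ S, G.degree v + Fintype.card V * #F := by
  have hdouble : ∑ v, #{u ∈ S | G.Adj v u} = ∑ u ∈ S, G.degree u := by
    refine (Finset.sum_card_bipartiteAbove_eq_sum_card_bipartiteBelow G.Adj).trans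
      (Finset.sum_congr rfl fun u _ => ?_)
    rw [← G.card_neighborFinset_eq_degree, G.neighborFinset_eq_filter]
    simp only [Finset.bipartiteBelow, G.adj_comm]
  calc ∑ v, G.degree v = ∑ v ∈ S, G.degree v + ∑ v ∈ Sᶜ, G.degree v :=
        (Finset.sum_add_sum_compl S _).symm
    _ ≤ ∑ v ∈ S, G.degree v + ∑ v ∈ Sᶜ,
          (#{u ∈ Sᶜ | (G.withoutColors c F).Adj v u} + #{u ∈ S | G.Adj v u} + #F) :=
        by gcongr with v
           exact degree_le_card_filter_withoutColors_add hc S F v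
    _ ≤ _ := by
      rw [Finset.sum_add_distrib, Finset.sum_add_distrib, Finset.sum_const]
      have h1 : ∑ v ∈ Sᶜ, #{u ∈ S | G.Adj v u} ≤ ∑ v, #{u ∈ S | G.Adj v u} :=
        Finset.sum_le_sum_of_subset (Finset.subset_univ _)
      have h2 : #Sᶜ ≤ Fintype.card V := Finset.card_le_univ _
      have h3 := Nat.mul_le_mul_right #F h2
      simp only [smul_eq_mul] at *
      omega

end Counting

lemma exists_isRainbowPath_avoiding [Fintype V] [Nonempty V] [DecidableEq V] [DecidableEq C]
    {G : SimpleGraph V} [DecidableRel G.Adj] {c : V → V → C} (hc : IsProperEdgeColoring G c)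
    (S : Finset V) (F : Finset C) {a : ℝ} (ha : 0 < a)
    (havg : a * Fintype.card V ≤ ∑ v ∈ Sᶜ, (#{u ∈ Sᶜ | (G.withoutColors c F).Adj v u} : ℝ)) :
    ∃ v t, IsRainbowPath G c (v :: t) ∧ (∀ x ∈ v :: t, x ∉ S) ∧
      (∀ x ∈ edgeColors c (v :: t), x ∉ F) ∧ a ≤ 4 * t.length := by
  set H := G.withoutColors c F
  have havg' : a * #Sᶜ ≤ ∑ v ∈ Sᶜ, (#{u ∈ Sᶜ | H.Adj v u} : ℝ) :=
    le_trans (by gcongr; exact Finset.card_le_univ _) havg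
  have hS : Sᶜ.Nonempty := by
    rw [Finset.nonempty_iff_ne_empty]
    intro h
    simp only [h, Finset.sum_empty] at havg
    have : (0 : ℝ) < Fintype.card V := by exact_mod_cast Fintype.card_pos
    nlinarith
  obtain ⟨W, hWS, hW, hmin⟩ := exists_subset_forall_le_two_mul_card_filter_adj H hS a havg'
  obtain ⟨v, t, hpath, hpathW, hdeg⟩ :=
    exists_isRainbowPath_card_filter_adj_le (hc.mono (G.withoutColors_le c F)) hW
  refine ⟨v, t, hpath.mono (G.withoutColors_le c F), fun x hx => ?_, fun x hx => ?_, ?_⟩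
  · exact Finset.mem_compl.1 (hWS (hpathW x hx))
  · obtain ⟨u, w, huw, rfl⟩ := exists_rel_of_mem_edgeColors hpath.1 hx
    exact huw.2.1
  · have := hmin v (hpathW v List.mem_cons_self)
    have hdeg' : (#{u ∈ W | H.Adj v u} : ℝ) ≤ 2 * t.length := by exact_mod_cast hdeg
    linarith

lemma List.getElem_inj_of_nodup_flatten {α : Type*} {L : List (List α)} (h : L.flatten.Nodup)
    {j j' i i' : ℕ} (hj : j < L.length) (hj' : j' < L.length)
    (hi : i < L[j].length) (hi' : i' < L[j'].length) (heq : L[j][i] = L[j'][i']) :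
    j = j' ∧ i = i' := by
  obtain ⟨hnodup, hdisj⟩ := List.nodup_flatten.1 h
  have hjj : j = j' := by
    by_contra hne
    rcases Nat.lt_or_gt_of_ne hne with hlt | hlt
    · exact List.pairwise_iff_getElem.1 hdisj j j' hj hj' hlt
        (List.getElem_mem hi) (heq ▸ List.getElem_mem hi')
    · exact List.pairwise_iff_getElem.1 hdisj j' j hj' hj hlt
        (List.getElem_mem hi') (heq ▸ List.getElem_mem hi)
  subst hjj
  exact ⟨rfl, (hnodup _ (List.getElem_mem hj)).getElem_inj_iff.1 heq⟩

def edgeCount (L : List (List V)) : ℕ :=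
  (L.map (·.length - 1)).sum

def IsRainbowPathForestList (G : SimpleGraph V) (c : V → V → C) (L : List (List V)) : Prop :=
  (∀ l ∈ L, l ≠ [] ∧ l.IsChain G.Adj) ∧ L.flatten.Nodup ∧ (L.map (edgeColors c)).flatten.Nodup

namespace IsRainbowPathForestList

variable {G : SimpleGraph V} {c : V → V → C} {L : List (List V)}

lemma nil : IsRainbowPathForestList G c [] := by
  simp [IsRainbowPathForestList]

lemma cons (hL : IsRainbowPathForestList G c L) {l : List V} (hne : l ≠ [])
    (hl : IsRainbowPath G c l) (hS : ∀ x ∈ l, x ∉ L.flatten)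
    (hF : ∀ x ∈ edgeColors c l, x ∉ (L.map (edgeColors c)).flatten) :
    IsRainbowPathForestList G c (l :: L) := by
  refine ⟨?_, ?_, ?_⟩
  · simpa [hne, hl.1] using hL.1
  · exact List.nodup_append.2 ⟨hl.2.1, hL.2.1, fun x hx y hy hxy => hS x hx (hxy ▸ hy)⟩
  · exact List.nodup_append.2 ⟨hl.2.2, hL.2.2, fun x hx y hy hxy => hF x hx (hxy ▸ hy)⟩

lemma card_vertices [DecidableEq V] (hL : IsRainbowPathForestList G c L) :
    L.flatten.toFinset.card = edgeCount L + L.length := by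
  rw [List.toFinset_card_of_nodup hL.2.1, List.length_flatten, edgeCount]
  have hpos : ∀ l ∈ L, 0 < l.length := fun l hl => List.length_pos_iff.2 (hL.1 l hl).1
  clear hL
  induction L with
  | nil => rfl
  | cons l L ih =>
    simp only [List.map_cons, List.sum_cons, List.length_cons]
    have := hpos l List.mem_cons_self
    have := ih fun l' hl' => hpos l' (List.mem_cons_of_mem l hl')
    omega

lemma card_colors [DecidableEq C] (hL : IsRainbowPathForestList G c L) :
    ((L.map (edgeColors c)).flatten.toFinset).card = edgeCount L := by
  rw [List.toFinset_card_of_nodup hL.2.2, List.length_flatten, List.map_map, edgeCount]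
  congr 1
  exact List.map_congr_left fun l _ => length_edgeColors c l

end IsRainbowPathForestList

lemma IsRainbowPathForestList.exists_isRainbowPathForest {G : SimpleGraph V} {c : V → V → C}
    {L : List (List V)} (hL : IsRainbowPathForestList G c L) :
    ∃ (ℓ : Fin L.length → ℕ) (p : ∀ j, Fin (ℓ j + 1) → V),
      IsRainbowPathForest G c ℓ p ∧ ∑ j, ℓ j = edgeCount L := by
  obtain ⟨hpaths, hverts, hcols⟩ := hL
  have hlen (j : Fin L.length) : L[j.1].length - 1 + 1 = L[j.1].length := by
    have := List.length_pos_iff.2 (hpaths _ (List.getElem_mem j.2)).1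
    omega
  refine ⟨fun j => L[j.1].length - 1, fun j i => L[j.1][i.1]'(i.2.trans_eq (hlen j)),
    ⟨?_, ?_, ?_⟩, ?_⟩
  · intro j i
    exact List.isChain_iff_getElem.1 (hpaths _ (List.getElem_mem j.2)).2 i
      (Nat.add_lt_of_lt_sub i.2)
  · rintro ⟨j, i⟩ ⟨j', i'⟩ heq
    obtain ⟨hj, hi⟩ := List.getElem_inj_of_nodup_flatten hverts j.2 j'.2 _ _ heq
    obtain rfl := Fin.ext hj
    obtain rfl := Fin.ext hi
    rfl
  · have hcol (j : Fin L.length) (i : Fin (L[j.1].length - 1)) :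
        c (L[j.1][i.1]'(by omega)) (L[j.1][i.1 + 1]'(Nat.add_lt_of_lt_sub i.2)) =
          ((L.map (edgeColors c))[j.1]'(by simp))[i.1]'(by simp) := by
      simp only [List.getElem_map, getElem_edgeColors]
    rintro ⟨j, i⟩ ⟨j', i'⟩ heq
    simp only [Fin.val_castSucc, Fin.val_succ, hcol] at heq
    obtain ⟨hj, hi⟩ := List.getElem_inj_of_nodup_flatten hcols _ _ _ _ heq
    obtain rfl := Fin.ext hj
    obtain rfl := Fin.ext hi
    rfl
  · rw [edgeCount, ← List.sum_ofFn]
    congr 1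
    apply List.ext_getElem <;> simp

section Iteration

variable [Fintype V] [Nonempty V] [DecidableEq V] [DecidableEq C] {G : SimpleGraph V}
  [DecidableRel G.Adj] {c : V → V → C}

lemma IsRainbowPathForestList.exists_cons (hc : IsProperEdgeColoring G c) {L : List (List V)}
    (hL : IsRainbowPathForestList G c L) {ε d : ℝ}
    (hd : d * Fintype.card V ≤ ∑ v, (G.degree v : ℝ))
    (hΔ : ∀ v, (G.degree v : ℝ) ≤ ε * Fintype.card V / 4)
    (hpos : 0 < d - (edgeCount L + L.length) * ε / 2 - edgeCount L) :
    ∃ l, IsRainbowPathForestList G c (l :: L) ∧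
      d - (edgeCount L + L.length) * ε / 2 - edgeCount L ≤ 4 * (l.length - 1 : ℕ) := by
  set S := L.flatten.toFinset
  set F := (L.map (edgeColors c)).flatten.toFinset
  have hcount : ∑ v, (G.degree v : ℝ) ≤
      ∑ v ∈ Sᶜ, (#{u ∈ Sᶜ | (G.withoutColors c F).Adj v u} : ℝ) +
        2 * ∑ v ∈ S, (G.degree v : ℝ) + Fintype.card V * edgeCount L := by
    rw [← hL.card_colors]
    exact_mod_cast sum_degree_le_sum_card_filter_withoutColors_add hc S F
  have hS : ∑ v ∈ S, (G.degree v : ℝ) ≤ (edgeCount L + L.length) * (ε * Fintype.card V / 4) := by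
    calc ∑ v ∈ S, (G.degree v : ℝ) ≤ ∑ v ∈ S, ε * Fintype.card V / 4 :=
          Finset.sum_le_sum fun v _ => hΔ v
      _ = _ := by rw [Finset.sum_const, nsmul_eq_mul, hL.card_vertices]; push_cast; ring
  obtain ⟨v, t, hpath, hvS, hvF, hlen⟩ := exists_isRainbowPath_avoiding hc S F hpos (by nlinarith)
  refine ⟨v :: t, hL.cons (List.cons_ne_nil v t) hpath (fun x hx h => hvS x hx ?_)
    (fun x hx h => hvF x hx ?_), by simpa using hlen⟩
  · exact List.mem_toFinset.2 h
  · exact List.mem_toFinset.2 h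

lemma exists_isRainbowPathForestList_deficit_le (hc : IsProperEdgeColoring G c) {ε d : ℝ}
    (hε : 0 < ε) {k : ℕ} (hk : 7 * k ≤ d) (hd : d * Fintype.card V ≤ ∑ v, (G.degree v : ℝ))
    (hΔ : ∀ v, (G.degree v : ℝ) ≤ ε * Fintype.card V / 4) :
    ∀ i ≤ k, ∃ L, IsRainbowPathForestList G c L ∧ L.length ≤ i ∧
      d - edgeCount L ≤ max ((7 / 8) ^ i * d) (ε * d) := by
  intro i
  induction i with
  | zero => exact fun _ => ⟨[], .nil, le_rfl, by simp [edgeCount]⟩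
  | succ i ih =>
  intro hi
  obtain ⟨L, hL, hlen, hdef⟩ := ih (by omega)
  by_cases hsmall : d - edgeCount L ≤ ε * d
  · exact ⟨L, hL, by omega, hsmall.trans (le_max_right _ _)⟩
  push Not at hsmall
  have hD : d - edgeCount L ≤ (7 / 8) ^ i * d := by
    simpa [hsmall.not_ge] using hdef
  set D := d - edgeCount L with hD_def
  set σ := (edgeCount L + L.length) * ε / 2 with hσ_def
  have hd0 : 0 ≤ d := le_trans (by positivity) hk
  have hσ : σ ≤ (d + k) * ε / 2 := by
    have : (L.length : ℝ) ≤ k := by exact_mod_cast (show L.length ≤ k by omega)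
    have : (edgeCount L : ℝ) ≤ d := by nlinarith
    rw [hσ_def]
    gcongr
  obtain ⟨l, hL', hl⟩ := hL.exists_cons hc hd hΔ (by nlinarith)
  refine ⟨l :: L, hL', by simp; omega, ?_⟩
  have hnew : d - edgeCount (l :: L) = D - (l.length - 1 : ℕ) := by
    simp only [edgeCount, List.map_cons, List.sum_cons, Nat.cast_add, hD_def]
    ring
  rw [hnew, pow_succ]
  -- A path of length `e ≥ (D - σ)/4` leaves deficit `≤ 7D/8` if `2σ ≤ D`, and `≤ εd` otherwise.
  rcases le_or_gt (2 * σ) D with hcase | hcase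
  · exact le_max_of_le_left (by nlinarith)
  · exact le_max_of_le_right (by nlinarith)

end Iteration

lemma pow_natCeil_logb_inv_le {b x : ℝ} (hb : 1 < b) (hx : 0 < x) :
    b⁻¹ ^ ⌈Real.logb b x⁻¹⌉₊ ≤ x := by
  have h : x⁻¹ ≤ b ^ (⌈Real.logb b x⁻¹⌉₊ : ℝ) :=
    (Real.logb_le_iff_le_rpow hb (inv_pos.2 hx)).1 (Nat.le_ceil _)
  rw [Real.rpow_natCast] at h
  rw [inv_pow]
  exact inv_le_of_inv_le₀ hx h

/-- For every `ε > 0` there exists `d₀` such that for all `d ≥ d₀`: every properly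
edge-coloured graph on `n` vertices with average degree at least `d` and maximum
degree at most `εn/4` contains a rainbow path forest with at most
`⌈log_{8/7}(1/ε)⌉` components and at least `(1-ε)d` edges. -/
theorem stmt7 (ε : ℝ) (hε : 0 < ε) :
    ∃ d₀ : ℝ, ∀ d : ℝ, d₀ ≤ d →
      ∀ (V C : Type) [Fintype V] [Nonempty V] (G : SimpleGraph V) (c : V → V → C),
        IsProperEdgeColoring G c →
        d * Fintype.card V ≤ 2 * (G.edgeSet.ncard : ℝ) →
        (∀ v, ((G.neighborSet v).ncard : ℝ) ≤ ε * Fintype.card V / 4) →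
        ∃ (t : ℕ) (ℓ : Fin t → ℕ) (p : ∀ j, Fin (ℓ j + 1) → V),
          IsRainbowPathForest G c ℓ p ∧
          t ≤ ⌈Real.logb (8 / 7) ε⁻¹⌉₊ ∧
          (1 - ε) * d ≤ ((∑ j, ℓ j : ℕ) : ℝ) := by
  classical
  set k := ⌈Real.logb (8 / 7) ε⁻¹⌉₊
  refine ⟨7 * k, fun d hk V C _ _ G c hc hedges hΔ => ?_⟩
  have hdeg (v : V) : (G.neighborSet v).ncard = G.degree v := by
    rw [← Nat.card_coe_set_eq, Nat.card_eq_fintype_card, G.card_neighborSet_eq_degree]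
  have hsum : d * Fintype.card V ≤ ∑ v, (G.degree v : ℝ) := by
    rw [← G.coe_edgeFinset, Set.ncard_coe_finset] at hedges
    exact_mod_cast hedges.trans_eq (by exact_mod_cast (G.sum_degrees_eq_twice_card_edges).symm)
  obtain ⟨L, hL, hlen, hdef⟩ := exists_isRainbowPathForestList_deficit_le hc hε hk hsum
    (fun v => hdeg v ▸ hΔ v) k le_rfl
  obtain ⟨ℓ, p, hp, hℓ⟩ := hL.exists_isRainbowPathForest
  have hpow : (7 / 8 : ℝ) ^ k ≤ ε := by
    have := pow_natCeil_logb_inv_le (by norm_num : (1 : ℝ) < 8 / 7) hε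
    rwa [show (8 / 7 : ℝ)⁻¹ = 7 / 8 by norm_num] at this
  have hd : 0 ≤ d := le_trans (by positivity) hk
  refine ⟨L.length, ℓ, p, hp, hlen, ?_⟩
  rw [hℓ]
  have := hdef.trans (max_le (by nlinarith) le_rfl)
  linarith
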